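/- Let π = UjiV cover π′ = UijV in the weak order (i < j, and π, π′ differ by exchanging the adjacent entries i and j of their one-line notations), and suppose π is a linear extension of an acyclic reduced pipe dream P ∈ Π(ω). Then: if the contact graph P♯ has no arc j → i, then π′ is also a linear extension of P; otherwise, π′ is a linear extension of the pipe dream P′ obtained from P by flipping the furthest-northeast contact between pipes i and j in P. -/

import Mathlib

/-- A pipe dream of size `n` on the triangular shape, with boxes indexed by pairs
`(r, c)` of a row `r` and a column `c`, both `0`-indexed (rows increase southwards,
columns increase eastwards).  `cross r c = true` means that box `(r, c)` contains a
crossing tile; all other boxes contain elbow tiles.  Crossings are only allowed in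
the full boxes of the triangular shape, i.e. those with `r + c + 2 ≤ n` (the boxes
with `r + c + 1 = n` are the half-boxes on the antidiagonal, which are forced
elbows).  The `n` pipes enter horizontally on the left side in rows `0, …, n-1` and
exit vertically on the top side in columns `0, …, n-1`; pipe `k` is the pipe
entering at row `k`.  An elbow tile connects the west edge of its box to the north
edge (the pipe travelling through this elbow passes northwest of the tile) and the
south edge to the east edge (this pipe passes southeast of the tile); a crossing
tile connects west to east and south to north. -/
structure PipeDream (n : ℕ) where
  cross : ℕ → ℕ → Bool
  inShape : ∀ r c : ℕ, cross r c = true → r + c + 2 ≤ n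

namespace PipeDream

variable {n : ℕ}

/-- `(P.pipes r c).1` is the label of the pipe entering box `(r, c)` from the west,
and `(P.pipes r c).2` is the label of the pipe entering box `(r, c)` from the south
(junk value `0` if there is no box below box `(r, c)` in the triangular shape). -/
def pipes (P : PipeDream n) : ℕ → ℕ → ℕ × ℕ
  | r, c =>
    (if hc : c = 0 then r
      else if P.cross r (c - 1) then (pipes P r (c - 1)).1 else (pipes P r (c - 1)).2,
     if hr : r + c + 2 ≤ n then
        if P.cross (r + 1) c then (pipes P (r + 1) c).2 else (pipes P (r + 1) c).1
      else 0)
  termination_by r c => (n - r) + c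
  decreasing_by all_goals omega

/-- The pipe entering box `(r, c)` from the west (travelling eastwards). -/
def west (P : PipeDream n) (r c : ℕ) : ℕ := (pipes P r c).1

/-- The pipe entering box `(r, c)` from the south (travelling northwards). -/
def south (P : PipeDream n) (r c : ℕ) : ℕ := (pipes P r c).2

/-- The pipe exiting on the top side at column `c`. -/
def exitPipe (P : PipeDream n) (c : ℕ) : ℕ :=
  if P.cross 0 c then P.south 0 c else P.west 0 c

/-- `P` has exit permutation `ω`, i.e. the pipe exiting at column `c` is `ω c`;
equivalently, pipe `k` exits at column `ω⁻¹ k`. -/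
def HasExitPerm (P : PipeDream n) (ω : Equiv.Perm (Fin n)) : Prop :=
  ∀ c : Fin n, P.exitPipe c.val = (ω c).val

/-- `P` is reduced: any two of its pipes cross at most once. -/
def Reduced (P : PipeDream n) : Prop :=
  ∀ r c r' c' : ℕ, P.cross r c = true → P.cross r' c' = true → (r, c) ≠ (r', c') →
    ¬ ((P.west r c = P.west r' c' ∧ P.south r c = P.south r' c') ∨
        (P.west r c = P.south r' c' ∧ P.south r c = P.west r' c'))

/-- The arcs of the contact graph `P♯` of `P`: there is one arc for each elbow
contact of `P` (an elbow tile in a full box of the triangular shape), oriented from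
the pipe passing northwest of the contact (the one travelling west-to-north) to the
pipe passing southeast of it (the one travelling south-to-east). -/
def Arc (P : PipeDream n) (i j : ℕ) : Prop :=
  ∃ r c : ℕ, r + c + 2 ≤ n ∧ P.cross r c = false ∧ P.west r c = i ∧ P.south r c = j

/-- `P` is acyclic: its contact graph has no directed cycle. -/
def Acyclic (P : PipeDream n) : Prop := ∀ i : ℕ, ¬ Relation.TransGen P.Arc i i

/-- `i ⪯_P j` : there is a directed path (possibly empty) from `i` to `j` in the
contact graph of `P`. -/
def Path (P : PipeDream n) (i j : ℕ) : Prop := Relation.ReflTransGen P.Arc i j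

/-- `π` is a linear extension of `P` : `π⁻¹ i < π⁻¹ j` for every arc `i → j` of the
contact graph of `P`. -/
def LinExt (P : PipeDream n) (π : Equiv.Perm (Fin n)) : Prop :=
  ∀ i j : Fin n, P.Arc i.val j.val → π⁻¹ i < π⁻¹ j

/-- There is a contact (an elbow tile in a full box) between pipes `i` and `j`
at box `b`. -/
def ContactAt (P : PipeDream n) (i j : ℕ) (b : ℕ × ℕ) : Prop :=
  b.1 + b.2 + 2 ≤ n ∧ P.cross b.1 b.2 = false ∧
    ((P.west b.1 b.2 = i ∧ P.south b.1 b.2 = j) ∨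
      (P.west b.1 b.2 = j ∧ P.south b.1 b.2 = i))

/-- `P'` is obtained from `P` by the flip exchanging the contact at box `b` with the
crossing at box `b'` (a contact and a crossing between the same two pipes). -/
def IsFlip (P P' : PipeDream n) (b b' : ℕ × ℕ) : Prop :=
  b ≠ b' ∧
  P.cross b.1 b.2 = false ∧ P.cross b'.1 b'.2 = true ∧
  P'.cross b.1 b.2 = true ∧ P'.cross b'.1 b'.2 = false ∧
  (∀ r c : ℕ, (r, c) ≠ b → (r, c) ≠ b' → P.cross r c = P'.cross r c) ∧
  ((P.west b.1 b.2 = P.west b'.1 b'.2 ∧ P.south b.1 b.2 = P.south b'.1 b'.2) ∨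
    (P.west b.1 b.2 = P.south b'.1 b'.2 ∧ P.south b.1 b.2 = P.west b'.1 b'.2))

/-- There is an increasing flip from `P` to `P'`: a flip exchanging a contact at a
box `b` weakly southwest of the box `b'` of the corresponding crossing. -/
def IncFlip (P P' : PipeDream n) : Prop :=
  ∃ b b' : ℕ × ℕ, P.IsFlip P' b b' ∧ b'.1 ≤ b.1 ∧ b.2 ≤ b'.2

end PipeDream

/-- The weak order on permutations of `Fin n` : `π ≤ σ` if and only if
`Inv(π) ⊆ Inv(σ)`, where `Inv(π)` is the set of pairs `(i, j)` with `i < j` and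
`π⁻¹ i > π⁻¹ j`. -/
def WeakLE {n : ℕ} (π σ : Equiv.Perm (Fin n)) : Prop :=
  ∀ i j : Fin n, i < j → π⁻¹ j < π⁻¹ i → σ⁻¹ j < σ⁻¹ i

/-!
Cut the shape along its diagonals. Each pipe meets each diagonal once, and from one diagonal to
the next the order of the pipes changes only at crossings, by exchanging two neighbours. Since
the pipes enter in increasing order, two pipes appear inverted on a diagonal only after they have
crossed, and in a reduced pipe dream they cross at most once. So if `π` is a linear extension and
`j → i` is an arc, every contact of `i` and `j` is an arc `j → i` lying after their crossing `b'`.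
The flip turns the crossing at `b'` into a contact `i → j` and exchanges the labels `i`, `j` on
the diagonals after `b'` up to the flipped contact `b`; as `b` is the last contact, every arc of
`P'` is `i → j`, an arc of `P` with `i`, `j` exchanged, or an arc of `P` other than `j → i`.
Each kind is respected by `π' = (i j) ∘ π`.
-/

namespace PipeDream

variable {n : ℕ} (P : PipeDream n)

theorem west_zero (r : ℕ) : P.west r 0 = r := by
  rw [west, pipes]; simp

theorem west_succ (r c : ℕ) :
    P.west r (c + 1) = if P.cross r c then P.west r c else P.south r c := by
  rw [west, pipes]; simp [west, south]

theorem south_eq {r c : ℕ} (h : r + c + 2 ≤ n) :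
    P.south r c = if P.cross (r + 1) c then P.south (r + 1) c else P.west (r + 1) c := by
  rw [south, pipes]; simp [west, south, h]

/-- The west side (`isSouth = false`) or the south side (`isSouth = true`) of box `(row, col)`. -/
structure Edge where
  row : ℕ
  col : ℕ
  isSouth : Bool

namespace Edge

/-- Half-boxes on the antidiagonal have a west side but no south side in the shape. -/
def IsIn (n : ℕ) (e : Edge) : Prop := e.row + e.col + cond e.isSouth 2 1 ≤ n

def IsEntry (e : Edge) : Prop := e.isSouth = false ∧ e.col = 0

/-- Every pipe crosses each diagonal `diag = d` in exactly one edge, and the edges of a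
diagonal are totally ordered by `pos`, from northwest to southeast. -/
def diag (e : Edge) : ℤ := (e.col : ℤ) - e.row

def pos (e : Edge) : ℕ := 2 * e.row + e.isSouth.toNat

/-- The box whose east or north side is `e`. -/
def predBox : Edge → ℕ × ℕ
  | ⟨r, c, false⟩ => (r, c - 1)
  | ⟨r, c, true⟩ => (r + 1, c)

theorem eq_of_diag_eq_of_pos_eq {e e' : Edge} (hd : e.diag = e'.diag) (hp : e.pos = e'.pos) :
    e = e' := by
  rcases e with ⟨r, c, _ | _⟩ <;> rcases e' with ⟨r', c', _ | _⟩ <;>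
    simp [diag, pos] at hd hp ⊢ <;> omega

end Edge

open Edge

def label (e : Edge) : ℕ := cond e.isSouth (P.south e.row e.col) (P.west e.row e.col)

/-- The edge one step back along the pipe through `e` (for `e` not an entry edge): a crossing
passes the pipe on from the side of `e.predBox` parallel to `e`, an elbow from the other side. -/
def pred (e : Edge) : Edge :=
  ⟨e.predBox.1, e.predBox.2, P.cross e.predBox.1 e.predBox.2 == e.isSouth⟩

variable {P}

theorem label_entry (r : ℕ) : P.label ⟨r, 0, false⟩ = r := P.west_zero r

theorem label_pred {e : Edge} (he : e.IsIn n) (hne : ¬ e.IsEntry) :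
    P.label (P.pred e) = P.label e := by
  rcases e with ⟨r, c, _ | _⟩
  · obtain ⟨c, rfl⟩ : ∃ c', c = c' + 1 :=
      Nat.exists_eq_succ_of_ne_zero (by simpa [IsEntry] using hne)
    cases h : P.cross r c <;> simp [label, pred, predBox, west_succ, h]
  · have hrc : r + c + 2 ≤ n := he
    cases h : P.cross (r + 1) c <;> simp [label, pred, predBox, P.south_eq hrc, h]

theorem isIn_pred {e : Edge} (he : e.IsIn n) (hne : ¬ e.IsEntry) : (P.pred e).IsIn n := by
  rcases e with ⟨r, c, _ | _⟩ <;> simp [IsIn, IsEntry, pred, predBox] at he hne ⊢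
  · cases h : P.cross r (c - 1) <;> simp <;> omega
  · cases h : P.cross (r + 1) c
    · simp; omega
    · simpa using P.inShape _ _ h

theorem diag_pred {e : Edge} (hne : ¬ e.IsEntry) : (P.pred e).diag = e.diag - 1 := by
  rcases e with ⟨r, c, _ | _⟩ <;> simp [diag, IsEntry, pred, predBox] at hne ⊢ <;> omega

theorem measure_pred_lt {e : Edge} (he : e.IsIn n) (hne : ¬ e.IsEntry) :
    (P.pred e).col + (n - (P.pred e).row) < e.col + (n - e.row) := by
  rcases e with ⟨r, c, _ | _⟩ <;> simp [IsIn, IsEntry, pred, predBox] at he hne ⊢ <;> omega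

theorem row_add_toNat_le_label {e : Edge} (he : e.IsIn n) :
    e.row + e.isSouth.toNat ≤ P.label e := by
  by_cases hne : e.IsEntry
  · rcases e with ⟨r, c, s⟩
    obtain ⟨rfl, rfl⟩ := hne
    simp [label_entry]
  · have ih := row_add_toNat_le_label (isIn_pred (P := P) he hne)
    rw [label_pred he hne] at ih
    rcases e with ⟨r, c, _ | _⟩ <;> simp [pred, predBox] at ih ⊢ <;> omega
termination_by e.col + (n - e.row)
decreasing_by exact measure_pred_lt he hne

theorem pred_injective {e e' : Edge} (hne : ¬ e.IsEntry) (hne' : ¬ e'.IsEntry)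
    (h : P.pred e = P.pred e') : e = e' := by
  rcases e with ⟨r, c, _ | _⟩ <;> rcases e' with ⟨r', c', _ | _⟩ <;>
    simp only [IsEntry, pred, predBox, Edge.mk.injEq, true_and] at hne hne' h ⊢
  · obtain ⟨h1, h2, -⟩ := h; exact ⟨by omega, by omega, trivial⟩
  · obtain ⟨rfl, rfl, h⟩ := h; simp at h
  · obtain ⟨rfl, rfl, h⟩ := h; simp at h
  · obtain ⟨h1, h2, -⟩ := h; exact ⟨by omega, by omega, trivial⟩

theorem eq_of_isEntry_of_label_eq {e e' : Edge} (hent : e.IsEntry) (he' : e'.IsIn n)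
    (hd : e.diag = e'.diag) (hl : P.label e = P.label e') : e = e' := by
  rcases e with ⟨r, c, s⟩
  obtain ⟨rfl, rfl⟩ := hent
  have hrow := row_add_toNat_le_label (P := P) he'
  rw [← hl, label_entry] at hrow
  rcases e' with ⟨r', c', _ | _⟩ <;> simp [diag] at hd hrow ⊢ <;> omega

theorem eq_of_label_eq {e e' : Edge} (he : e.IsIn n) (he' : e'.IsIn n) (hd : e.diag = e'.diag)
    (hl : P.label e = P.label e') : e = e' := by
  by_cases hne : e.IsEntry
  · exact eq_of_isEntry_of_label_eq hne he' hd hl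
  by_cases hne' : e'.IsEntry
  · exact (eq_of_isEntry_of_label_eq hne' he hd.symm hl.symm).symm
  refine pred_injective (P := P) hne hne'
    (eq_of_label_eq (isIn_pred he hne) (isIn_pred he' hne') ?_ ?_)
  · rw [diag_pred hne, diag_pred hne', hd]
  · rw [label_pred he hne, label_pred he' hne', hl]
termination_by e.col + (n - e.row)
decreasing_by exact measure_pred_lt he hne

def CrossAt (P : PipeDream n) (i j : ℕ) (b : ℕ × ℕ) : Prop :=
  P.cross b.1 b.2 = true ∧
    ((P.west b.1 b.2 = i ∧ P.south b.1 b.2 = j) ∨ (P.west b.1 b.2 = j ∧ P.south b.1 b.2 = i))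

theorem pos_pred_mem_Icc (e : Edge) : (P.pred e).pos ∈ Set.Icc e.pos (e.pos + 2) := by
  rcases e with ⟨r, c, _ | _⟩ <;> simp only [pred, predBox, pos, Set.mem_Icc] <;>
    cases P.cross _ _ <;> simp <;> omega

/-- If the predecessors of two edges `e'`, `e` of a diagonal are in the opposite order, they are
the south and west sides of one crossing box. -/
theorem crossAt_of_pos_pred_lt {e e' : Edge} {i j : ℕ} (hd : e.diag = e'.diag)
    (hpos : e'.pos < e.pos) (hlt : (P.pred e).pos < (P.pred e').pos)
    (hi : P.label (P.pred e) = i) (hj : P.label (P.pred e') = j) :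
    P.CrossAt i j (e.row, e.col - 1) ∧ e.col ≠ 0 := by
  have h := Set.mem_Icc.mp (P.pos_pred_mem_Icc e)
  have h' := Set.mem_Icc.mp (P.pos_pred_mem_Icc e')
  rcases e with ⟨r, c, _ | _⟩ <;> rcases e' with ⟨r', c', _ | _⟩ <;>
    simp only [pred, predBox, pos, diag, label] at hd hpos hlt h h' hi hj ⊢ <;>
    cases hc : P.cross r (c - 1) <;> cases hc' : P.cross (r' + 1) c' <;>
    simp [hc, hc'] at hpos hlt h h' hi hj ⊢ <;> try omega
  obtain rfl : r = r' + 1 := by omega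
  obtain rfl : c = c' + 1 := by omega
  exact ⟨⟨hc, Or.inl ⟨hi, hj⟩⟩, by omega⟩

/-- Pipes enter in increasing order from north to south, so two pipes can appear in decreasing
order along a diagonal only after crossing. -/
theorem exists_crossAt_of_pos_lt {e e' : Edge} {i j : ℕ} (hij : i < j) (he : e.IsIn n)
    (he' : e'.IsIn n) (hd : e.diag = e'.diag) (hi : P.label e = i) (hj : P.label e' = j)
    (hpos : e'.pos < e.pos) : ∃ b : ℕ × ℕ, P.CrossAt i j b ∧ (b.2 : ℤ) - b.1 < e.diag := by
  have hrow := row_add_toNat_le_label (P := P) he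
  have hrow' := row_add_toNat_le_label (P := P) he'
  by_cases hne : e.IsEntry
  · rcases e with ⟨r, c, s⟩
    obtain ⟨rfl, rfl⟩ := hne
    rw [label_entry] at hi
    rcases e' with ⟨r', c', _ | _⟩ <;> simp [diag, pos] at hd hpos <;> omega
  by_cases hne' : e'.IsEntry
  · rcases e' with ⟨r', c', s'⟩
    obtain ⟨rfl, rfl⟩ := hne'
    rw [label_entry] at hj
    rcases e with ⟨r, c, _ | _⟩ <;> simp [diag, pos] at hd hpos hrow <;> omega
  have hpi : P.label (P.pred e) = i := (label_pred he hne).trans hi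
  have hpj : P.label (P.pred e') = j := (label_pred he' hne').trans hj
  rcases lt_or_ge (P.pred e').pos (P.pred e).pos with hlt | hge
  · obtain ⟨b, hb, hbd⟩ := exists_crossAt_of_pos_lt hij (isIn_pred he hne) (isIn_pred he' hne')
      (by rw [diag_pred hne, diag_pred hne', hd]) hpi hpj hlt
    exact ⟨b, hb, by rw [diag_pred hne] at hbd; omega⟩
  · have hne_pos : (P.pred e).pos ≠ (P.pred e').pos := fun h => by
      have := eq_of_diag_eq_of_pos_eq (by rw [diag_pred hne, diag_pred hne', hd]) h
      rw [← hpi, ← hpj, this] at hij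
      exact lt_irrefl _ hij
    obtain ⟨hb, hc⟩ := crossAt_of_pos_pred_lt hd hpos (lt_of_le_of_ne hge hne_pos) hpi hpj
    exact ⟨_, hb, by simp only [diag]; omega⟩
termination_by e.col + (n - e.row)
decreasing_by exact measure_pred_lt he hne

theorem exists_crossAt_of_south_lt_west {r c : ℕ} (hrc : r + c + 2 ≤ n)
    (h : P.south r c < P.west r c) :
    ∃ b : ℕ × ℕ, P.CrossAt (P.south r c) (P.west r c) b ∧ (b.2 : ℤ) - b.1 < (c : ℤ) - r :=
  exists_crossAt_of_pos_lt (e := ⟨r, c, true⟩) (e' := ⟨r, c, false⟩) h hrc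
    (by simp [IsIn]; omega) rfl rfl rfl (by simp [pos])

theorem Reduced.eq_of_crossAt (hred : P.Reduced) {i j : ℕ} {b b₂ : ℕ × ℕ}
    (h : P.CrossAt i j b) (h₂ : P.CrossAt i j b₂) : b = b₂ := by
  by_contra hne
  refine hred b.1 b.2 b₂.1 b₂.2 h.1 h₂.1 hne ?_
  rcases h.2 with ⟨h1, h2⟩ | ⟨h1, h2⟩ <;> rcases h₂.2 with ⟨g1, g2⟩ | ⟨g1, g2⟩ <;> simp [*]

@[ext]
theorem ext {P Q : PipeDream n} (h : P.cross = Q.cross) : P = Q := by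
  cases P; cases Q; congr

def uncross (P : PipeDream n) (b : ℕ × ℕ) : PipeDream n where
  cross r c := if (r, c) = b then false else P.cross r c
  inShape r c h := P.inShape r c (by split_ifs at h; exact h)

theorem uncross_eq_of_isFlip {P' : PipeDream n} {b b' : ℕ × ℕ} (h : P.IsFlip P' b b') :
    P'.uncross b = P.uncross b' := by
  obtain ⟨-, hb, -, -, hb', hagree, -⟩ := h
  ext r c
  simp only [uncross]
  split_ifs with h₁ h₂ h₂
  · rfl
  · subst h₁; exact hb.symm
  · subst h₂; exact hb'
  · exact (hagree r c h₁ h₂).symm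

theorem pred_uncross {e : ℕ × ℕ} {f : Edge} (hf : f.predBox ≠ e) :
    (P.uncross e).pred f = P.pred f := by
  simp [pred, uncross, hf]

abbrev swapAt (P : PipeDream n) (b : ℕ × ℕ) : Equiv.Perm ℕ :=
  Equiv.swap (P.west b.1 b.2) (P.south b.1 b.2)

theorem label_uncross {e : ℕ × ℕ} (he : P.cross e.1 e.2 = true) {f : Edge} (hf : f.IsIn n) :
    (P.uncross e).label f =
      if (e.2 : ℤ) - e.1 < f.diag then P.swapAt e (P.label f)
      else P.label f := by
  have heIn : e.1 + e.2 + 2 ≤ n := P.inShape _ _ he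
  by_cases hne : f.IsEntry
  · rcases f with ⟨r, c, s⟩
    obtain ⟨rfl, rfl⟩ := hne
    have hx := row_add_toNat_le_label (P := P) (e := ⟨e.1, e.2, false⟩) (by simp [IsIn]; omega)
    have hy := row_add_toNat_le_label (P := P) (e := ⟨e.1, e.2, true⟩) heIn
    simp only [label_entry, diag] at hx hy ⊢
    split_ifs with hlt
    · exact (Equiv.swap_apply_of_ne_of_ne (by simp [label] at hx; omega)
        (by simp [label] at hy; omega)).symm
    · rfl
  have ih := label_uncross he (isIn_pred (P := P.uncross e) hf hne)
  rw [label_pred hf hne, diag_pred hne] at ih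
  rw [← label_pred (P := P) hf hne]
  by_cases hbox : f.predBox = e
  · have hd : f.diag - 1 = (e.2 : ℤ) - e.1 := by
      rw [← diag_pred (P := P) hne]; simp [diag, pred, hbox]
    rw [ih, if_neg (by omega), if_pos (by omega)]
    simp only [pred, hbox, uncross, if_true, he]
    cases f.isSouth <;> simp [label]
  · rw [pred_uncross hbox] at ih
    rw [ih]
    split_ifs with h₁ h₂ h₂ <;> try rfl
    · omega
    · have hfresh : ∀ s, P.label (P.pred f) ≠ P.label ⟨e.1, e.2, s⟩ := fun s h => hbox <| by
        have := eq_of_label_eq (isIn_pred hf hne) (e' := ⟨e.1, e.2, s⟩)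
          (by cases s <;> simp [IsIn] <;> omega)
          (by rw [diag_pred hne]; exact (by omega : f.diag - 1 = (e.2 : ℤ) - e.1)) h
        show ((P.pred f).row, (P.pred f).col) = e
        rw [this]
      exact (Equiv.swap_apply_of_ne_of_ne (hfresh false) (hfresh true)).symm
termination_by f.col + (n - f.row)
decreasing_by exact measure_pred_lt hf hne

theorem swapAt_of_isFlip {P' : PipeDream n} {b b' : ℕ × ℕ} (h : P.IsFlip P' b b') :
    P'.swapAt b = P.swapAt b' := by
  have hQ := uncross_eq_of_isFlip h
  obtain ⟨-, -, hb', hP'b, -, -, hmatch⟩ := h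
  have hb'In := P.inShape _ _ hb'
  have hP'In := P'.inShape _ _ hP'b
  have key : ∀ s, P'.label ⟨b.1, b.2, s⟩ =
      if (b'.2 : ℤ) - b'.1 < (b.2 : ℤ) - b.1 then P.swapAt b' (P.label ⟨b.1, b.2, s⟩)
      else P.label ⟨b.1, b.2, s⟩ := fun s => by
    have hIn : (⟨b.1, b.2, s⟩ : Edge).IsIn n := by cases s <;> simp [IsIn] <;> omega
    have h1 := label_uncross hb' hIn
    have h2 := label_uncross hP'b hIn
    simp only [diag, lt_irrefl, if_false] at h1 h2
    rw [hQ] at h2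
    exact h2.symm.trans h1
  have hw := key false
  have hs := key true
  simp only [label, cond_false, cond_true] at hw hs
  rw [swapAt, hw, hs]
  split_ifs <;> rcases hmatch with ⟨h₁, h₂⟩ | ⟨h₁, h₂⟩ <;> simp [h₁, h₂, Equiv.swap_comm]

theorem label_of_isFlip {P' : PipeDream n} {b b' : ℕ × ℕ} (h : P.IsFlip P' b b')
    (hlt : (b'.2 : ℤ) - b'.1 < (b.2 : ℤ) - b.1) {f : Edge} (hf : f.IsIn n) :
    P'.label f = if (b'.2 : ℤ) - b'.1 < f.diag ∧ f.diag ≤ (b.2 : ℤ) - b.1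
      then P.swapAt b' (P.label f) else P.label f := by
  have h₂ := label_uncross h.2.2.2.1 hf
  rw [uncross_eq_of_isFlip h, swapAt_of_isFlip h, label_uncross h.2.2.1 hf] at h₂
  split_ifs at h₂ ⊢ <;> first | omega | exact (Equiv.injective _ h₂).symm

section Flip

variable {P' : PipeDream n} {b b' : ℕ × ℕ} {i j : ℕ}

theorem west_south_of_contactAt (hji : ¬ P.Arc i j) (hb : P.ContactAt i j b) :
    P.west b.1 b.2 = j ∧ P.south b.1 b.2 = i :=
  hb.2.2.resolve_left fun h => hji ⟨b.1, b.2, hb.1, hb.2.1, h⟩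

theorem crossAt_of_isFlip (hflip : P.IsFlip P' b b') (hb : P.ContactAt i j b) :
    P.CrossAt i j b' := by
  refine ⟨hflip.2.2.1, ?_⟩
  rcases hflip.2.2.2.2.2.2 with ⟨h₁, h₂⟩ | ⟨h₁, h₂⟩ <;> rcases hb.2.2 with ⟨g₁, g₂⟩ | ⟨g₁, g₂⟩ <;>
    rw [← h₁, ← h₂] <;> tauto

/-- By reducedness, `i` and `j` cannot have crossed before reaching their unique crossing. -/
theorem west_south_of_crossAt (hred : P.Reduced) (hij : i < j) (hb' : P.CrossAt i j b') :
    P.west b'.1 b'.2 = i ∧ P.south b'.1 b'.2 = j := by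
  refine hb'.2.resolve_right fun h => ?_
  obtain ⟨b₂, hb₂, hd⟩ := exists_crossAt_of_south_lt_west (P := P) (P.inShape _ _ hb'.1) (by omega)
  rw [h.1, h.2] at hb₂
  rw [hred.eq_of_crossAt hb₂ hb'] at hd
  exact lt_irrefl _ hd

theorem diag_lt_of_contactAt (hred : P.Reduced) (hij : i < j) (hji : ¬ P.Arc i j)
    (hb' : P.CrossAt i j b') {t : ℕ × ℕ} (ht : P.ContactAt i j t) :
    (b'.2 : ℤ) - b'.1 < (t.2 : ℤ) - t.1 := by
  obtain ⟨hw, hs⟩ := west_south_of_contactAt hji ht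
  obtain ⟨b₂, hb₂, hd⟩ := exists_crossAt_of_south_lt_west (P := P) ht.1 (by omega)
  rw [hw, hs] at hb₂
  rwa [hred.eq_of_crossAt hb₂ hb'] at hd

/-- After the flip the arc at `b'` is `i → j`, and `i`, `j` are exchanged exactly on the
diagonals after `b'` up to `b`, which contain every contact `j → i` of `P`. -/
theorem arc_of_isFlip (hred : P.Reduced) (hij : i < j) (hji : ¬ P.Arc i j)
    (hb : P.ContactAt i j b) (hmin : ∀ b₂ : ℕ × ℕ, P.ContactAt i j b₂ → b.1 ≤ b₂.1 ∧ b₂.2 ≤ b.2)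
    (hflip : P.IsFlip P' b b') {a c : ℕ} (h : P'.Arc a c) :
    (a = i ∧ c = j) ∨ P.Arc (Equiv.swap i j a) (Equiv.swap i j c) ∨
      (P.Arc a c ∧ ¬ (a = j ∧ c = i)) := by
  obtain ⟨r, k, hrk, hcr, ha, hc⟩ := h
  have hb' := crossAt_of_isFlip hflip hb
  obtain ⟨hwb', hsb'⟩ := west_south_of_crossAt hred hij hb'
  have hlt := diag_lt_of_contactAt hred hij hji hb' hb
  have hw := label_of_isFlip hflip hlt (f := ⟨r, k, false⟩) (by simp [IsIn]; omega)
  have hs := label_of_isFlip hflip hlt (f := ⟨r, k, true⟩) hrk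
  simp only [label, diag, cond_false, cond_true, swapAt, hwb', hsb'] at hw hs
  by_cases hrkb' : (r, k) = b'
  · subst hrkb'
    rw [if_neg (by simp)] at hw hs
    exact Or.inl ⟨by rw [← ha, hw, hwb'], by rw [← hc, hs, hsb']⟩
  have hPcr : P.cross r k = false := by
    by_cases hrkb : (r, k) = b
    · subst hrkb; rw [hflip.2.2.2.1] at hcr; exact absurd hcr (by simp)
    · rw [hflip.2.2.2.2.2.1 r k hrkb hrkb', hcr]
  have harc : P.Arc (P.west r k) (P.south r k) := ⟨r, k, hrk, hPcr, rfl, rfl⟩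
  split_ifs at hw hs with hdiag
  · right; left
    rwa [← ha, ← hc, hw, hs, Equiv.swap_apply_self, Equiv.swap_apply_self]
  · right; right
    rw [← ha, ← hc, hw, hs]
    refine ⟨harc, fun hji' => hdiag ⟨?_, ?_⟩⟩
    · exact diag_lt_of_contactAt hred hij hji hb' (t := (r, k)) ⟨hrk, hPcr, Or.inr hji'⟩
    · have := hmin (r, k) ⟨hrk, hPcr, Or.inr hji'⟩
      simp only at this
      omega

end Flip

end PipeDream

theorem Fin.swap_lt_swap_of_lt {n : ℕ} {q q₁ m m' : Fin n} (hq : q.val + 1 = q₁.val)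
    (h : m < m') (hne : ¬ (m = q ∧ m' = q₁)) : Equiv.swap q q₁ m < Equiv.swap q q₁ m' := by
  rw [Fin.lt_def] at h ⊢
  simp only [Fin.ext_iff] at hne
  simp only [Equiv.swap_apply_def]
  split_ifs <;> simp only [Fin.ext_iff] at * <;> omega

namespace Equiv.Perm

variable {n : ℕ} {π : Perm (Fin n)} {q q₁ i j : Fin n}

theorem inv_mul_swap_apply (hq : π q = j) (hq₁ : π q₁ = i) (a : Fin n) :
    (π * swap q q₁)⁻¹ a = π⁻¹ (swap i j a) := by
  rw [mul_swap_eq_swap_mul, hq, hq₁, mul_inv_rev, swap_inv, mul_apply, swap_comm]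

theorem inv_mul_swap_lt_of_lt (hadj : q.val + 1 = q₁.val) (hq : π q = j) (hq₁ : π q₁ = i)
    {a c : Fin n} (h : π⁻¹ a < π⁻¹ c) (hne : ¬ (a = j ∧ c = i)) :
    (π * swap q q₁)⁻¹ a < (π * swap q q₁)⁻¹ c := by
  rw [mul_inv_rev, swap_inv, mul_apply, mul_apply]
  exact Fin.swap_lt_swap_of_lt hadj h fun ⟨ha, hc⟩ =>
    hne ⟨(inv_eq_iff_eq.mp ha).trans hq, (inv_eq_iff_eq.mp hc).trans hq₁⟩

end Equiv.Perm

theorem linExt_of_cover_general (n : ℕ) (P : PipeDream n)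
    (hred : P.Reduced)
    (π π' : Equiv.Perm (Fin n)) (i j : Fin n) (hij : i < j)
    (p : ℕ) (hp : p + 1 < n)
    (hπp : π ⟨p, Nat.lt_of_succ_lt hp⟩ = j) (hπp1 : π ⟨p + 1, hp⟩ = i)
    (hπ' : π' = π * Equiv.swap ⟨p, Nat.lt_of_succ_lt hp⟩ ⟨p + 1, hp⟩)
    (hlin : P.LinExt π) :
    (¬ P.Arc j.val i.val → P.LinExt π') ∧
    (P.Arc j.val i.val →
      ∀ (b b' : ℕ × ℕ) (P' : PipeDream n),
        P.ContactAt i.val j.val b →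
        (∀ b₂ : ℕ × ℕ, P.ContactAt i.val j.val b₂ → b.1 ≤ b₂.1 ∧ b₂.2 ≤ b.2) →
        P.IsFlip P' b b' → P'.LinExt π') := by
  subst hπ'
  have hkeep : ∀ a c : Fin n, P.Arc a c → ¬ (a = j ∧ c = i) → _ := fun a c harc =>
    Equiv.Perm.inv_mul_swap_lt_of_lt rfl hπp hπp1 (hlin a c harc)
  refine ⟨fun hji a c harc => hkeep a c harc fun ⟨ha, hc⟩ => hji (ha ▸ hc ▸ harc), ?_⟩
  intro _ b b' P' hb hmin hflip a c harc
  have hj : π⁻¹ j = ⟨p, Nat.lt_of_succ_lt hp⟩ := Equiv.Perm.inv_eq_iff_eq.mpr hπp.symm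
  have hi : π⁻¹ i = ⟨p + 1, hp⟩ := Equiv.Perm.inv_eq_iff_eq.mpr hπp1.symm
  have hji : ¬ P.Arc i j := fun h => by simpa [hi, hj, Fin.lt_def] using hlin i j h
  rw [Equiv.Perm.inv_mul_swap_apply hπp hπp1, Equiv.Perm.inv_mul_swap_apply hπp hπp1]
  rcases PipeDream.arc_of_isFlip hred hij hji hb hmin hflip harc with ⟨ha, hc⟩ | hswap | hkept
  · rw [Fin.ext ha, Fin.ext hc, Equiv.swap_apply_left, Equiv.swap_apply_right, hi, hj]
    simp [Fin.lt_def]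
  · exact hlin _ _ (by simpa only [Fin.val_injective.swap_apply] using hswap)
  · rw [← Equiv.Perm.inv_mul_swap_apply hπp hπp1, ← Equiv.Perm.inv_mul_swap_apply hπp hπp1]
    exact hkeep a c hkept.1 fun ⟨ha, hc⟩ => hkept.2 ⟨congrArg Fin.val ha, congrArg Fin.val hc⟩

/-- Let `π = U j i V` cover `π' = U i j V` in the weak order
(`i < j`, and `π`, `π'` differ by exchanging the adjacent entries `j, i` of their
one-line notations, at positions `p` and `p + 1`), and suppose `π` is a linear
extension of an acyclic reduced pipe dream `P ∈ Π(ω)`.  Then: if the contact graph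
`P♯` has no arc `j → i`, then `π'` is also a linear extension of `P`; otherwise,
`π'` is a linear extension of the pipe dream `P'` obtained from `P` by flipping the
furthest-northeast contact between pipes `i` and `j` in `P`. -/
theorem linExt_of_cover (n : ℕ) (ω : Equiv.Perm (Fin n)) (P : PipeDream n)
    (hred : P.Reduced) (hexit : P.HasExitPerm ω) (hacyclic : P.Acyclic)
    (π π' : Equiv.Perm (Fin n)) (i j : Fin n) (hij : i < j)
    (p : ℕ) (hp : p + 1 < n)
    (hπp : π ⟨p, Nat.lt_of_succ_lt hp⟩ = j) (hπp1 : π ⟨p + 1, hp⟩ = i)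
    (hπ' : π' = π * Equiv.swap ⟨p, Nat.lt_of_succ_lt hp⟩ ⟨p + 1, hp⟩)
    (hlin : P.LinExt π) :
    (¬ P.Arc j.val i.val → P.LinExt π') ∧
    (P.Arc j.val i.val →
      ∀ (b b' : ℕ × ℕ) (P' : PipeDream n),
        P.ContactAt i.val j.val b →
        (∀ b₂ : ℕ × ℕ, P.ContactAt i.val j.val b₂ → b.1 ≤ b₂.1 ∧ b₂.2 ≤ b.2) →
        P.IsFlip P' b b' → P'.LinExt π') :=
  linExt_of_cover_general n P hred π π' i j hij p hp hπp hπp1 hπ' hlin
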